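/- arXiv:2112.10287 — 2 statements merged into one kernel-verified Lean document; each statement's English description precedes it below -/
import Mathlib

section
/- Let Σ be the collection of independent sets of a matroid on the ground set Fin n, i.e. Σ is nonempty, closed under taking subsets, and satisfies the exchange property: whenever I, J ∈ Σ with |I| < |J|, there is x ∈ J \ I with I ∪ {x} ∈ Σ. Let G = {(1, χ_σ) ∈ ℤ × (Fin n → ℤ) : σ ∈ Σ}, where χ_σ is the 0/1 indicator vector of σ. Then the additive submonoid of ℤ × (Fin n → ℤ) generated by G is normal: every element z of the subgroup generated by G that can be written as a finite nonnegative rational linear combination of elements of G already lies in the additive submonoid generated by G. -/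
/-- The 0/1 indicator vector of a finset `σ ⊆ Fin n`. -/
def indVec {n : ℕ} (σ : Finset (Fin n)) : Fin n → ℤ :=
  fun i => if i ∈ σ then 1 else 0

/-- The generating set `G = {(1, χ_σ) : σ ∈ S}` inside `ℤ × (Fin n → ℤ)`. -/
def genSet {n : ℕ} (S : Set (Finset (Fin n))) : Set (ℤ × (Fin n → ℤ)) :=
  {p | ∃ σ ∈ S, p = (1, indVec σ)}

/-- The embedding of the lattice `ℤ × (Fin n → ℤ)` into the `ℚ`-vector space
`ℚ × (Fin n → ℚ)`. -/
def toRat {n : ℕ} (p : ℤ × (Fin n → ℤ)) : ℚ × (Fin n → ℚ) :=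
  ((p.1 : ℚ), fun i => (p.2 i : ℚ))

namespace MN
open Finset
open scoped Classical

variable {n : ℕ} (S : Set (Finset (Fin n)))

noncomputable def rk (A : Finset (Fin n)) : ℕ :=
  (A.powerset.filter (fun I => I ∈ S)).sup Finset.card

variable {S}

section Basic
variable (hne : S.Nonempty) (hdown : ∀ I ∈ S, ∀ J ⊆ I, J ∈ S)
include hne hdown
set_option linter.unusedSectionVars false

theorem empty_mem : ∅ ∈ S := by
  obtain ⟨I, hI⟩ := hne
  exact hdown I hI ∅ (Finset.empty_subset I)

theorem card_le_rk {I A : Finset (Fin n)} (hI : I ∈ S) (hIA : I ⊆ A) :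
    I.card ≤ rk S A :=
  Finset.le_sup (by simp [Finset.mem_filter, Finset.mem_powerset, hI, hIA])

theorem exists_basis (A : Finset (Fin n)) :
    ∃ I ∈ S, I ⊆ A ∧ I.card = rk S A := by
  have hnonempty : (A.powerset.filter (fun I => I ∈ S)).Nonempty := by
    refine ⟨∅, ?_⟩
    simp [Finset.mem_filter, empty_mem hne hdown]
  obtain ⟨I, hI, hcard⟩ := Finset.exists_mem_eq_sup _ hnonempty Finset.card
  simp only [Finset.mem_filter, Finset.mem_powerset] at hI
  exact ⟨I, hI.2, hI.1, hcard.symm⟩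

theorem rk_mono {A B : Finset (Fin n)} (hAB : A ⊆ B) : rk S A ≤ rk S B := by
  obtain ⟨I, hI, hIA, hc⟩ := exists_basis hne hdown A
  rw [← hc]
  exact card_le_rk hne hdown hI (hIA.trans hAB)

theorem rk_le_card (A : Finset (Fin n)) : rk S A ≤ A.card := by
  apply Finset.sup_le
  intro I hI
  simp only [Finset.mem_filter, Finset.mem_powerset] at hI
  exact Finset.card_le_card hI.1

theorem indep_of_rk_eq_card {A : Finset (Fin n)} (h : rk S A = A.card) : A ∈ S := by
  obtain ⟨I, hI, hIA, hc⟩ := exists_basis hne hdown A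
  have : I = A := Finset.eq_of_subset_of_card_le hIA (by omega)
  rwa [← this]

end Basic

section Exch
variable (hne : S.Nonempty) (hdown : ∀ I ∈ S, ∀ J ⊆ I, J ∈ S)
    (hexch : ∀ I ∈ S, ∀ J ∈ S, I.card < J.card → ∃ x ∈ J \ I, insert x I ∈ S)
include hne hdown hexch
set_option linter.unusedSectionVars false

/-- any maximal independent subset of `A` has cardinality `rk S A`. -/
theorem maximal_card {I A : Finset (Fin n)} (hI : I ∈ S) (hIA : I ⊆ A)
    (hmax : ∀ z ∈ A, z ∉ I → insert z I ∉ S) : I.card = rk S A := by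
  refine le_antisymm (card_le_rk hne hdown hI hIA) ?_
  by_contra hlt
  push_neg at hlt
  obtain ⟨J, hJ, hJA, hJc⟩ := exists_basis hne hdown A
  obtain ⟨x, hx, hins⟩ := hexch I hI J hJ (by omega)
  simp only [Finset.mem_sdiff] at hx
  exact hmax x (hJA hx.1) hx.2 hins

/-- extension of an independent subset of `A` to a basis of `A`. -/
theorem exists_basis_superset {I A : Finset (Fin n)} (hI : I ∈ S) (hIA : I ⊆ A) :
    ∃ J ∈ S, I ⊆ J ∧ J ⊆ A ∧ J.card = rk S A := by
  by_cases h : I.card = rk S A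
  · exact ⟨I, hI, subset_rfl, hIA, h⟩
  · have hlt : I.card < rk S A :=
      lt_of_le_of_ne (card_le_rk hne hdown hI hIA) h
    obtain ⟨B, hB, hBA, hBc⟩ := exists_basis hne hdown A
    obtain ⟨x, hx, hins⟩ := hexch I hI B hB (by omega)
    simp only [Finset.mem_sdiff] at hx
    have hxA : x ∈ A := hBA hx.1
    have : rk S A - (insert x I).card < rk S A - I.card := by
      have h1 : (insert x I).card = I.card + 1 := Finset.card_insert_of_notMem hx.2
      have h2 : (insert x I).card ≤ rk S A :=
        card_le_rk hne hdown hins (Finset.insert_subset hxA hIA)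
      omega
    obtain ⟨J, hJ, hIJ, hJA, hJc⟩ := exists_basis_superset hins
        (Finset.insert_subset hxA hIA)
    exact ⟨J, hJ, (Finset.subset_insert x I).trans hIJ, hJA, hJc⟩
termination_by rk S A - I.card

theorem rk_submod (A B : Finset (Fin n)) :
    rk S (A ∪ B) + rk S (A ∩ B) ≤ rk S A + rk S B := by
  obtain ⟨I, hI, hIAB, hIc⟩ := exists_basis hne hdown (A ∩ B)
  obtain ⟨J, hJ, hIJ, hJAB, hJc⟩ :=
    exists_basis_superset hne hdown hexch hI (hIAB.trans Finset.inter_subset_union)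
  have hJA : (J ∩ A).card ≤ rk S A :=
    card_le_rk hne hdown (hdown J hJ _ Finset.inter_subset_left) Finset.inter_subset_right
  have hJB : (J ∩ B).card ≤ rk S B :=
    card_le_rk hne hdown (hdown J hJ _ Finset.inter_subset_left) Finset.inter_subset_right
  have h1 : J ∩ (A ∪ B) = J := Finset.inter_eq_left.mpr hJAB
  have h1c : (J ∩ (A ∪ B)).card = J.card := by rw [h1]
  have hsplit : (J ∩ (A ∪ B)).card + (J ∩ (A ∩ B)).card
      = (J ∩ A).card + (J ∩ B).card := by
    rw [Finset.inter_union_distrib_left J A B,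
      Finset.inter_inter_distrib_left J A B]
    exact Finset.card_union_add_card_inter _ _
  have h2 : I.card ≤ (J ∩ (A ∩ B)).card :=
    Finset.card_le_card (Finset.subset_inter hIJ hIAB)
  omega

theorem rk_insert_le (A : Finset (Fin n)) (z : Fin n) :
    rk S (insert z A) ≤ rk S A + 1 := by
  obtain ⟨I, hI, hIA, hIc⟩ := exists_basis hne hdown (insert z A)
  have : I.erase z ∈ S := hdown I hI _ (Finset.erase_subset z I)
  have hsub : I.erase z ⊆ A := by
    intro u hu
    simp only [Finset.mem_erase] at hu
    rcases Finset.mem_insert.mp (hIA hu.2) with h | h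
    · exact absurd h hu.1
    · exact h
  have := card_le_rk hne hdown this hsub
  have := Finset.pred_card_le_card_erase (a := z) (s := I)
  omega

end Exch

variable (S) in
def MinDep (c : Finset (Fin n)) : Prop := c ∉ S ∧ ∀ c' ⊂ c, c' ∈ S

variable (S) in
noncomputable def circ (I : Finset (Fin n)) (a : Fin n) : Finset (Fin n) :=
  if h : ∃ c, c ⊆ insert a I ∧ MinDep S c then h.choose else ∅

section Circuit
variable (hne : S.Nonempty) (hdown : ∀ I ∈ S, ∀ J ⊆ I, J ∈ S)
    (hexch : ∀ I ∈ S, ∀ J ∈ S, I.card < J.card → ∃ x ∈ J \ I, insert x I ∈ S)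
include hne hdown hexch
set_option linter.unusedSectionVars false

omit hne hexch in
theorem dep_has_minDep {c : Finset (Fin n)} (hc : c ∉ S) :
    ∃ c' ⊆ c, MinDep S c' := by
  by_cases h : ∀ c' ⊂ c, c' ∈ S
  · exact ⟨c, subset_rfl, hc, h⟩
  · push_neg at h
    obtain ⟨c', hc'sub, hc'⟩ := h
    obtain ⟨c'', hsub, hmd⟩ := dep_has_minDep hc'
    exact ⟨c'', hsub.trans hc'sub.subset, hmd⟩
termination_by c.card
decreasing_by exact Finset.card_lt_card hc'sub

omit hexch in
theorem rk_indep {I : Finset (Fin n)} (hI : I ∈ S) : rk S I = I.card :=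
  le_antisymm (rk_le_card hne hdown I) (card_le_rk hne hdown hI subset_rfl)

omit hexch in
theorem minDep_mem {c I : Finset (Fin n)} {a : Fin n} (hI : I ∈ S)
    (hsub : c ⊆ insert a I) (hmd : MinDep S c) : a ∈ c := by
  by_contra ha
  have : c ⊆ I := by
    intro u hu
    rcases Finset.mem_insert.mp (hsub hu) with h | h
    · exact absurd (h ▸ hu) ha
    · exact h
  exact hmd.1 (hdown I hI c this)

omit hexch in
theorem minDep_rk {c : Finset (Fin n)} (hmd : MinDep S c) :
    rk S c + 1 = c.card := by
  have hcne : c.Nonempty := by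
    rcases Finset.eq_empty_or_nonempty c with h | h
    · exact absurd (h ▸ empty_mem hne hdown) hmd.1
    · exact h
  obtain ⟨x, hx⟩ := hcne
  have h1 : c.erase x ∈ S := hmd.2 _ (Finset.erase_ssubset hx)
  have h2 := card_le_rk hne hdown h1 (Finset.erase_subset x c)
  have h3 : (c.erase x).card = c.card - 1 := Finset.card_erase_of_mem hx
  have h4 : rk S c ≠ c.card := fun h => hmd.1 (indep_of_rk_eq_card hne hdown h)
  have h5 := rk_le_card hne hdown (S := S) c
  have := Finset.card_pos.mpr ⟨x, hx⟩
  omega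

theorem minDep_unique {c₁ c₂ I : Finset (Fin n)} {a : Fin n} (hI : I ∈ S)
    (h₁ : c₁ ⊆ insert a I) (h₂ : c₂ ⊆ insert a I)
    (hmd₁ : MinDep S c₁) (hmd₂ : MinDep S c₂) : c₁ = c₂ := by
  by_contra hne'
  have hns₁ : ¬ c₁ ⊆ c₂ := fun h => hmd₁.1 (hmd₂.2 c₁ (lt_of_le_of_ne h hne'))
  have hns₂ : ¬ c₂ ⊆ c₁ := fun h => hmd₂.1 (hmd₁.2 c₂ (lt_of_le_of_ne h (Ne.symm hne')))
  have hi₁ : c₁ ∩ c₂ ⊂ c₁ := by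
    refine Finset.ssubset_iff_subset_ne.mpr ⟨Finset.inter_subset_left, ?_⟩
    intro h
    exact hns₁ (by rw [← h]; exact Finset.inter_subset_right)
  have hind : c₁ ∩ c₂ ∈ S := hmd₁.2 _ hi₁
  have ha₁ : a ∈ c₁ := minDep_mem hne hdown hI h₁ hmd₁
  have ha₂ : a ∈ c₂ := minDep_mem hne hdown hI h₂ hmd₂
  have herase : (c₁ ∪ c₂).erase a ⊆ I := by
    intro u hu
    simp only [Finset.mem_erase, Finset.mem_union] at hu
    have : u ∈ insert a I := by
      rcases hu.2 with h | h
      · exact h₁ h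
      · exact h₂ h
    rcases Finset.mem_insert.mp this with h | h
    · exact absurd h hu.1
    · exact h
  have herase_ind : (c₁ ∪ c₂).erase a ∈ S := hdown I hI _ herase
  have h5 : ((c₁ ∪ c₂).erase a).card ≤ rk S (c₁ ∪ c₂) :=
    card_le_rk hne hdown herase_ind (Finset.erase_subset _ _)
  have h6 : ((c₁ ∪ c₂).erase a).card = (c₁ ∪ c₂).card - 1 :=
    Finset.card_erase_of_mem (Finset.mem_union_left _ ha₁)
  have h7 := rk_submod hne hdown hexch c₁ c₂
  have h8 := minDep_rk hne hdown hmd₁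
  have h9 := minDep_rk hne hdown hmd₂
  have h10 : rk S (c₁ ∩ c₂) = (c₁ ∩ c₂).card := rk_indep hne hdown hind
  have h11 := Finset.card_union_add_card_inter c₁ c₂
  have h12 : 0 < (c₁ ∪ c₂).card :=
    Finset.card_pos.mpr ⟨a, Finset.mem_union_left _ ha₁⟩
  omega

theorem circ_spec {I : Finset (Fin n)} {a : Fin n} (hI : I ∈ S)
    (hdep : insert a I ∉ S) :
    circ S I a ⊆ insert a I ∧ MinDep S (circ S I a) := by
  have h : ∃ c, c ⊆ insert a I ∧ MinDep S c := by
    obtain ⟨c, hsub, hmd⟩ := dep_has_minDep hdown (c := insert a I) hdep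
    exact ⟨c, hsub, hmd⟩
  rw [circ, dif_pos h]
  exact h.choose_spec

theorem circ_eq {c I : Finset (Fin n)} {a : Fin n} (hI : I ∈ S)
    (hdep : insert a I ∉ S) (hsub : c ⊆ insert a I) (hmd : MinDep S c) :
    c = circ S I a := by
  obtain ⟨hs, hm⟩ := circ_spec hne hdown hexch hI hdep
  exact minDep_unique hne hdown hexch hI hsub hs hmd hm

theorem mem_circ {I : Finset (Fin n)} {a : Fin n} (hI : I ∈ S)
    (hdep : insert a I ∉ S) : a ∈ circ S I a := by
  obtain ⟨hs, hm⟩ := circ_spec hne hdown hexch hI hdep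
  exact minDep_mem hne hdown hI hs hm

theorem circ_erase_indep {I : Finset (Fin n)} {a : Fin n} {y : Fin n}
    (hI : I ∈ S) (hdep : insert a I ∉ S) (hy : y ∈ circ S I a) :
    (insert a I).erase y ∈ S := by
  by_contra hcon
  obtain ⟨c', hsub', hmd'⟩ := dep_has_minDep hdown hcon
  have : c' = circ S I a :=
    circ_eq hne hdown hexch hI hdep (hsub'.trans (Finset.erase_subset _ _)) hmd'
  have hy' : y ∉ c' := fun h => (Finset.mem_erase.mp (hsub' h)).1 rfl
  rw [this] at hy'
  exact hy' hy

omit hexch in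
theorem rk_insert_of_dep {I : Finset (Fin n)} {a : Fin n} (hI : I ∈ S)
    (hdep : insert a I ∉ S) : rk S (insert a I) = I.card := by
  have ha : a ∉ I := fun h => hdep (by rwa [Finset.insert_eq_self.mpr h])
  have hcard : (insert a I).card = I.card + 1 := Finset.card_insert_of_notMem ha
  have h1 : I.card ≤ rk S (insert a I) :=
    card_le_rk hne hdown hI (Finset.subset_insert a I)
  have h2 := rk_le_card hne hdown (S := S) (insert a I)
  have h3 : rk S (insert a I) ≠ (insert a I).card :=
    fun h => hdep (indep_of_rk_eq_card hne hdown h)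
  omega

theorem rk_union_dep {I : Finset (Fin n)} (hI : I ∈ S) (X : Finset (Fin n))
    (hX : ∀ x ∈ X, insert x I ∉ S) : rk S (I ∪ X) = I.card := by
  induction X using Finset.induction with
  | empty => simpa using rk_indep hne hdown hI
  | @insert x X' hx ih =>
    have hIX' : rk S (I ∪ X') = I.card := ih (fun u hu => hX u (Finset.mem_insert_of_mem hu))
    have hsub := rk_submod hne hdown hexch (insert x I) (I ∪ X')
    have h1 : insert x I ∪ (I ∪ X') = I ∪ insert x X' := by
      ext u; simp [Finset.mem_insert, Finset.mem_union]
    have h2 : I ⊆ insert x I ∩ (I ∪ X') := by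
      intro u hu
      simp [Finset.mem_inter, Finset.mem_insert, Finset.mem_union, hu]
    have h3 : I.card ≤ rk S (insert x I ∩ (I ∪ X')) := by
      calc I.card = rk S I := (rk_indep hne hdown hI).symm
      _ ≤ _ := rk_mono hne hdown h2
    have h4 : rk S (insert x I) = I.card :=
      rk_insert_of_dep hne hdown hI (hX x (Finset.mem_insert_self x X'))
    have h5 : I.card ≤ rk S (I ∪ insert x X') :=
      (rk_indep hne hdown hI).symm ▸ rk_mono hne hdown Finset.subset_union_left
    rw [h1] at hsub
    omega

theorem serial_exchange {I : Finset (Fin n)} (hI : I ∈ S)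
    (L : List (Fin n × Fin n))
    (hL : ∀ pr ∈ L, pr.1 ∉ I ∧ pr.2 ∈ I ∧ insert pr.1 I ∉ S ∧ pr.2 ∈ circ S I pr.1)
    (hnd1 : (L.map Prod.fst).Nodup) (hnd2 : (L.map Prod.snd).Nodup)
    (hpw : L.Pairwise (fun a b => b.2 ∉ circ S I a.1)) :
    ((I ∪ (L.map Prod.fst).toFinset) \ (L.map Prod.snd).toFinset) ∈ S := by
  induction L using List.reverseRecOn generalizing I with
  | nil => simpa using hI
  | append_singleton L' p ih =>
    have hp := hL p (by simp)
    obtain ⟨hp1, hp2, hp3, hp4⟩ := hp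
    have hp21 : p.2 ≠ p.1 := fun h => hp1 (h ▸ hp2)
    set I' := insert p.1 (I.erase p.2) with hI'def
    have hI'eq : I' = (insert p.1 I).erase p.2 := by
      rw [hI'def, Finset.erase_insert_of_ne (Ne.symm hp21)]
    have hI' : I' ∈ S := by
      rw [hI'eq]
      exact circ_erase_indep hne hdown hexch hI hp3 hp4
    -- facts about earlier pairs
    have hmemL : ∀ q ∈ L', q.1 ∉ I ∧ q.2 ∈ I ∧ insert q.1 I ∉ S ∧ q.2 ∈ circ S I q.1 :=
      fun q hq => hL q (by simp [hq])
    have hnd1' : (L'.map Prod.fst).Nodup := by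
      simp only [List.map_append, List.nodup_append] at hnd1; exact hnd1.1
    have hnd2' : (L'.map Prod.snd).Nodup := by
      simp only [List.map_append, List.nodup_append] at hnd2; exact hnd2.1
    have hfstne : ∀ q ∈ L', q.1 ≠ p.1 := by
      intro q hq h
      simp only [List.map_append, List.nodup_append] at hnd1
      exact hnd1.2.2 _ (List.mem_map_of_mem (f := Prod.fst) hq) p.1 (by simp) h
    have hsndne : ∀ q ∈ L', q.2 ≠ p.2 := by
      intro q hq h
      simp only [List.map_append, List.nodup_append] at hnd2
      exact hnd2.2.2 _ (List.mem_map_of_mem (f := Prod.snd) hq) p.2 (by simp) h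
    have hp2notc : ∀ q ∈ L', p.2 ∉ circ S I q.1 := by
      have := List.pairwise_append.mp (by simpa using hpw)
      exact fun q hq => this.2.2 q hq p (by simp)
    have hcsub : ∀ q ∈ L', circ S I q.1 ⊆ insert q.1 I' := by
      intro q hq u hu
      obtain ⟨hq1, hq2, hq3, hq4⟩ := hmemL q hq
      obtain ⟨hcs, hcm⟩ := circ_spec hne hdown hexch hI hq3
      rcases Finset.mem_insert.mp (hcs hu) with h | h
      · exact Finset.mem_insert.mpr (Or.inl h)
      · have hune : u ≠ p.2 := fun he => hp2notc q hq (he ▸ hu)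
        exact Finset.mem_insert.mpr (Or.inr (Finset.mem_insert.mpr (Or.inr
          (Finset.mem_erase.mpr ⟨hune, h⟩))))
    have hdep' : ∀ q ∈ L', insert q.1 I' ∉ S := by
      intro q hq hcon
      obtain ⟨hq1, hq2, hq3, hq4⟩ := hmemL q hq
      obtain ⟨hcs, hcm⟩ := circ_spec hne hdown hexch hI hq3
      exact hcm.1 (hdown _ hcon _ (hcsub q hq))
    have hcirc' : ∀ q ∈ L', circ S I' q.1 = circ S I q.1 := by
      intro q hq
      obtain ⟨hq1, hq2, hq3, hq4⟩ := hmemL q hq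
      obtain ⟨hcs, hcm⟩ := circ_spec hne hdown hexch hI hq3
      exact (circ_eq hne hdown hexch hI' (hdep' q hq) (hcsub q hq) hcm).symm
    have hL'new : ∀ q ∈ L', q.1 ∉ I' ∧ q.2 ∈ I' ∧ insert q.1 I' ∉ S ∧
        q.2 ∈ circ S I' q.1 := by
      intro q hq
      obtain ⟨hq1, hq2, hq3, hq4⟩ := hmemL q hq
      refine ⟨?_, ?_, hdep' q hq, ?_⟩
      · intro h
        rcases Finset.mem_insert.mp h with h | h
        · exact hfstne q hq h
        · exact hq1 (Finset.mem_erase.mp h).2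
      · exact Finset.mem_insert.mpr (Or.inr (Finset.mem_erase.mpr ⟨hsndne q hq, hq2⟩))
      · rw [hcirc' q hq]; exact hq4
    have hpw' : L'.Pairwise (fun a b => b.2 ∉ circ S I' a.1) := by
      have h0 : L'.Pairwise (fun a b => b.2 ∉ circ S I a.1) :=
        (List.pairwise_append.mp (by simpa using hpw)).1
      refine List.Pairwise.imp_of_mem ?_ h0
      intro a b ha hb h
      rwa [hcirc' a ha]
    have hres := ih hI' hL'new hnd1' hnd2' hpw'
    have hXI : ∀ u ∈ (L'.map Prod.fst).toFinset, u ∉ I := by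
      intro u hu
      simp only [List.mem_toFinset, List.mem_map] at hu
      obtain ⟨q, hq, rfl⟩ := hu
      exact (hmemL q hq).1
    have hYI : ∀ u ∈ (L'.map Prod.snd).toFinset, u ∈ I := by
      intro u hu
      simp only [List.mem_toFinset, List.mem_map] at hu
      obtain ⟨q, hq, rfl⟩ := hu
      exact (hmemL q hq).2.1
    have hsetEq : ((I' ∪ (L'.map Prod.fst).toFinset) \ (L'.map Prod.snd).toFinset)
        = ((I ∪ ((L' ++ [p]).map Prod.fst).toFinset) \ ((L' ++ [p]).map Prod.snd).toFinset) := by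
      ext u
      have f1 : u ∈ (L'.map Prod.fst).toFinset → u ∉ I := hXI u
      have f2 : u ∈ (L'.map Prod.snd).toFinset → u ∈ I := hYI u
      have f3 : p.1 ≠ p.2 := Ne.symm hp21
      simp only [List.map_append, List.toFinset_append, List.map_cons,
        List.map_nil, List.toFinset_cons, List.toFinset_nil, Finset.mem_sdiff,
        Finset.mem_union, Finset.mem_insert, Finset.mem_erase,
        Finset.notMem_empty, or_false, not_or, hI'def]
      constructor
      · rintro ⟨h1, h2⟩
        rcases h1 with (h | ⟨hne2, hmem⟩) | h
        · exact ⟨Or.inr (Or.inr h), h2, h ▸ f3⟩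
        · exact ⟨Or.inl hmem, h2, hne2⟩
        · exact ⟨Or.inr (Or.inl h), h2, fun he => (f1 h) (he ▸ hp2)⟩
      · rintro ⟨h1, h2, h3⟩
        rcases h1 with h | h | h
        · exact ⟨Or.inl (Or.inr ⟨h3, h⟩), h2⟩
        · exact ⟨Or.inr h, h2⟩
        · exact ⟨Or.inl (Or.inl h), h2⟩
    rw [hsetEq] at hres
    exact hres

theorem insert_into_exchanged {I J X : Finset (Fin n)} {w : Fin n}
    (hI : I ∈ S) (hJ : J ∈ S) (hJsub : J ⊆ I ∪ X) (hJcard : J.card = I.card)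
    (hX : ∀ x ∈ X, insert x I ∉ S) (hw : w ∉ I ∪ X) (hwI : insert w I ∈ S) :
    insert w J ∈ S := by
  by_contra hcon
  have h1 : rk S (insert w J) = J.card := rk_insert_of_dep hne hdown hJ hcon
  have h2 : rk S (I ∪ X) = I.card := rk_union_dep hne hdown hexch hI X hX
  have hwIcard : (insert w I).card = I.card + 1 :=
    Finset.card_insert_of_notMem (fun h => hw (Finset.mem_union_left _ h))
  have h3 : I.card + 1 ≤ rk S ((I ∪ X) ∪ insert w J) := by
    have hsub : insert w I ⊆ (I ∪ X) ∪ insert w J := by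
      intro u hu
      rcases Finset.mem_insert.mp hu with h | h
      · exact Finset.mem_union_right _ (h ▸ Finset.mem_insert_self w J)
      · exact Finset.mem_union_left _ (Finset.mem_union_left _ h)
    have := card_le_rk hne hdown hwI hsub
    omega
  have h4 : (I ∪ X) ∩ insert w J = J := by
    ext u
    simp only [Finset.mem_inter, Finset.mem_insert]
    constructor
    · rintro ⟨hu, h | h⟩
      · exact absurd (h ▸ hu) hw
      · exact h
    · intro h
      exact ⟨hJsub h, Or.inr h⟩
  have h5 := rk_submod hne hdown hexch (I ∪ X) (insert w J)
  rw [h4] at h5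
  have h6 : rk S J = J.card := rk_indep hne hdown hJ
  omega

end Circuit

section Aug
variable (hne : S.Nonempty) (hdown : ∀ I ∈ S, ∀ J ⊆ I, J ∈ S)
    (hexch : ∀ I ∈ S, ∀ J ∈ S, I.card < J.card → ∃ x ∈ J \ I, insert x I ∈ S)
set_option linter.unusedSectionVars false

variable {m : ℕ}

variable (S) in
noncomputable def levStep (τ : Fin m → Finset (Fin n)) (R : Finset (Fin n)) :
    Finset (Fin n) :=
  R ∪ Finset.univ.filter (fun z => ∃ z' ∈ R, ∃ k, z' ∉ τ k ∧
    insert z' (τ k) ∉ S ∧ z ∈ circ S (τ k) z' ∧ z ≠ z')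

variable (S) in
noncomputable def lev (τ : Fin m → Finset (Fin n)) (i0 : Fin n) : ℕ → Finset (Fin n)
  | 0 => {i0}
  | (j+1) => levStep S τ (lev τ i0 j)

theorem lev_succ (τ : Fin m → Finset (Fin n)) (i0 : Fin n) (j : ℕ) :
    lev S τ i0 (j+1) = levStep S τ (lev S τ i0 j) := rfl

theorem lev_mono (τ : Fin m → Finset (Fin n)) (i0 : Fin n) :
    Monotone (lev S τ i0) := by
  apply monotone_nat_of_le_succ
  intro j
  rw [lev_succ]
  exact Finset.subset_union_left

theorem lev_closed (τ : Fin m → Finset (Fin n)) (i0 : Fin n) {j : ℕ} {z z' : Fin n}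
    {k : Fin m} (hz' : z' ∈ lev S τ i0 j) (h1 : z' ∉ τ k)
    (h2 : insert z' (τ k) ∉ S) (h3 : z ∈ circ S (τ k) z') (h4 : z ≠ z') :
    z ∈ lev S τ i0 (j+1) := by
  rw [lev_succ, levStep]
  exact Finset.mem_union_right _ (Finset.mem_filter.mpr
    ⟨Finset.mem_univ z, z', hz', k, h1, h2, h3, h4⟩)

theorem lev_stab (τ : Fin m → Finset (Fin n)) (i0 : Fin n) :
    ∃ N, lev S τ i0 (N+1) = lev S τ i0 N := by
  by_contra h
  push_neg at h
  have hgrow : ∀ j, j + 1 ≤ (lev S τ i0 j).card := by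
    intro j
    induction j with
    | zero => simp [lev]
    | succ j ih =>
      have hss : lev S τ i0 j ⊂ lev S τ i0 (j+1) :=
        lt_of_le_of_ne (lev_mono τ i0 (Nat.le_succ j)) (Ne.symm (h j))
      have := Finset.card_lt_card hss
      omega
  have h1 := hgrow n
  have h2 : (lev S τ i0 n).card ≤ n := by
    calc (lev S τ i0 n).card ≤ (Finset.univ : Finset (Fin n)).card :=
      Finset.card_le_card (Finset.subset_univ _)
    _ = n := Finset.card_univ.trans (Fintype.card_fin n)
  omega

include hne hdown hexch in
theorem path_build (τ : Fin m → Finset (Fin n)) (i0 : Fin n) (hm : 0 < m) :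
    ∀ t (z : Fin n), z ∈ lev S τ i0 t → (t = 0 ∨ z ∉ lev S τ i0 (t-1)) →
    ∃ (p : ℕ → Fin n) (K : ℕ → Fin m), p t = z ∧ p 0 = i0 ∧
      (∀ j, j ≤ t → p j ∈ lev S τ i0 j) ∧
      (∀ j, 1 ≤ j → j ≤ t → p j ∉ lev S τ i0 (j-1)) ∧
      (∀ j, j < t → p j ∉ τ (K j) ∧ insert (p j) (τ (K j)) ∉ S ∧
        p (j+1) ∈ circ S (τ (K j)) (p j) ∧ p (j+1) ≠ p j) := by
  intro t
  induction t with
  | zero =>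
    intro z hz _
    have hz0 : z = i0 := Finset.mem_singleton.mp hz
    refine ⟨fun _ => i0, fun _ => ⟨0, hm⟩, hz0.symm, rfl, ?_, ?_, ?_⟩
    · intro j hj
      have : j = 0 := Nat.le_zero.mp hj
      subst this
      simp [lev]
    · intro j h1 h2
      omega
    · intro j hj
      omega
  | succ t ih =>
    intro z hz hmin
    have hznot : z ∉ lev S τ i0 t := by
      rcases hmin with h | h
      · exact absurd h (Nat.succ_ne_zero t)
      · simpa using h
    rw [lev_succ, levStep] at hz
    rcases Finset.mem_union.mp hz with h | h
    · exact absurd h hznot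
    · obtain ⟨_, z', hz', k, hk1, hk2, hk3, hk4⟩ := Finset.mem_filter.mp h
      have hz'min : t = 0 ∨ z' ∉ lev S τ i0 (t-1) := by
        rcases Nat.eq_zero_or_pos t with h0 | hpos
        · exact Or.inl h0
        · right
          intro hcon
          apply hznot
          have he : t - 1 + 1 = t := Nat.succ_pred_eq_of_pos hpos
          have h2 := lev_closed (S := S) τ i0 hcon hk1 hk2 hk3 hk4
          rwa [he] at h2
      obtain ⟨p, K, hp1, hp2, hp3, hp4, hp5⟩ := ih z' hz' hz'min
      refine ⟨Function.update p (t+1) z, Function.update K t k, ?_, ?_, ?_, ?_, ?_⟩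
      · simp [Function.update_self]
      · rw [Function.update_of_ne (Nat.succ_ne_zero t).symm]
        exact hp2
      · intro j hj
        rcases Nat.lt_or_ge j (t+1) with h | h
        · rw [Function.update_of_ne (by omega)]
          exact hp3 j (by omega)
        · have : j = t + 1 := by omega
          subst this
          simp only [Function.update_self]
          rw [lev_succ, levStep]
          exact hz
      · intro j h1 h2
        rcases Nat.lt_or_ge j (t+1) with h | h
        · rw [Function.update_of_ne (by omega)]
          exact hp4 j h1 (by omega)
        · have : j = t + 1 := by omega
          subst this
          simp only [Function.update_self, Nat.add_sub_cancel]
          exact hznot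
      · intro j hj
        rcases Nat.lt_or_ge j t with h | h
        · rw [Function.update_of_ne (by omega), Function.update_of_ne (by omega),
            Function.update_of_ne (by omega)]
          exact hp5 j h
        · have : j = t := by omega
          subst this
          rw [Function.update_self, Function.update_of_ne (by omega),
            Function.update_self, hp1]
          exact ⟨hk1, hk2, hk3, hk4⟩

variable (m) in
noncomputable def cov (τ : Fin m → Finset (Fin n)) (i : Fin n) : ℤ :=
  ∑ k, if i ∈ τ k then 1 else 0

theorem cov_nonneg (τ : Fin m → Finset (Fin n)) (i : Fin n) : 0 ≤ cov m τ i :=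
  Finset.sum_nonneg (fun k _ => by positivity)

theorem ind_sdiff (A X Y : Finset (Fin n)) (i : Fin n)
    (hXA : ∀ u ∈ X, u ∉ A) (hYA : Y ⊆ A) (hXY : ∀ u ∈ X, u ∉ Y) :
    (if i ∈ (A ∪ X) \ Y then (1:ℤ) else 0)
      = (if i ∈ A then 1 else 0) + (if i ∈ X then 1 else 0)
        - (if i ∈ Y then 1 else 0) := by
  by_cases h2 : i ∈ X
  · have h1 : i ∉ A := hXA i h2
    have h3 : i ∉ Y := hXY i h2
    simp [Finset.mem_sdiff, Finset.mem_union, h1, h2, h3]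
  · by_cases h3 : i ∈ Y
    · have h1 : i ∈ A := hYA h3
      simp [Finset.mem_sdiff, Finset.mem_union, h1, h2, h3]
    · by_cases h1 : i ∈ A <;>
        simp [Finset.mem_sdiff, Finset.mem_union, h1, h2, h3]

theorem ind_insert (B : Finset (Fin n)) (w i : Fin n) (hw : w ∉ B) :
    (if i ∈ insert w B then (1:ℤ) else 0)
      = (if i ∈ B then 1 else 0) + (if i = w then 1 else 0) := by
  by_cases h : i = w
  · subst h
    simp [hw]
  · simp [Finset.mem_insert, h]

include hne hdown hexch in
theorem aug (τ : Fin m → Finset (Fin n)) (hτ : ∀ k, τ k ∈ S) (x : Fin n → ℤ)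
    (hx : ∀ A : Finset (Fin n), ∑ i ∈ A, x i ≤ m * rk S A)
    (i0 : Fin n) (hcov : ∀ i, cov m τ i + (if i = i0 then 1 else 0) ≤ x i) :
    ∃ τ' : Fin m → Finset (Fin n), (∀ k, τ' k ∈ S) ∧
      ∀ i, cov m τ' i = cov m τ i + (if i = i0 then 1 else 0) := by
  -- m is positive
  have hx0 : 1 ≤ x i0 := by
    have h1 := hcov i0
    have h2 := cov_nonneg τ i0
    have h3 : (if i0 = i0 then (1:ℤ) else 0) = 1 := if_pos rfl
    rw [h3] at h1
    omega
  have hm : 0 < m := by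
    by_contra h
    push_neg at h
    interval_cases m
    have h2 := hx {i0}
    rw [Finset.sum_singleton] at h2
    norm_num at h2
    omega
  by_cases hA : ∃ t, ∃ z, z ∈ lev S τ i0 t ∧ ∃ k, z ∉ τ k ∧ insert z (τ k) ∈ S
  · -- augmenting path case
    have hPex : ∃ t, ∃ z, z ∈ lev S τ i0 t ∧ ∃ k, z ∉ τ k ∧ insert z (τ k) ∈ S := hA
    set t := Nat.find hPex with ht
    obtain ⟨z, hzlev, kstar, hzk1, hzk2⟩ := Nat.find_spec hPex
    have hmin : t = 0 ∨ z ∉ lev S τ i0 (t-1) := by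
      rcases Nat.eq_zero_or_pos t with h0 | hpos
      · exact Or.inl h0
      · right
        intro hcon
        exact Nat.find_min hPex (show t - 1 < t by omega)
          ⟨z, hcon, kstar, hzk1, hzk2⟩
    obtain ⟨p, K, hp1, hp2, hp3, hp4, hp5⟩ :=
      path_build hne hdown hexch τ i0 hm t z hzlev hmin
    have hinj : ∀ j j', j < j' → j' ≤ t → p j ≠ p j' := by
      intro j j' h1 h2 heq
      have ha := hp3 j (by omega)
      have hb := hp4 j' (by omega) h2
      exact hb (heq ▸ lev_mono (S := S) τ i0 (show j ≤ j' - 1 by omega) ha)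
    have hnoshort : ∀ j j', j < j' → j' < t → p (j'+1) ∉ circ S (τ (K j)) (p j) := by
      intro j j' h1 h2 hcon
      obtain ⟨hq1, hq2, hq3, hq4⟩ := hp5 j (by omega)
      have hne1 : p (j'+1) ≠ p j := fun h => hinj j (j'+1) (by omega) (by omega) h.symm
      have hmem := lev_closed (S := S) τ i0 (hp3 j (by omega)) hq1 hq2 hcon hne1
      have h5 := hp4 (j'+1) (by omega) (by omega)
      simp only [Nat.add_sub_cancel] at h5
      exact h5 (lev_mono (S := S) τ i0 (show j + 1 ≤ j' by omega) hmem)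
    -- swap lists per part
    set JL : Fin m → List ℕ := fun k => (List.range t).filter (fun j => K j = k)
      with hJL
    have hJLmem : ∀ k j, j ∈ JL k ↔ (j < t ∧ K j = k) := by
      intro k j
      simp [hJL, List.mem_filter, List.mem_range]
    set LL : Fin m → List (Fin n × Fin n) :=
      fun k => (JL k).map (fun j => (p j, p (j+1))) with hLL
    have hpairk : ∀ k, ∀ j ∈ JL k, p j ∉ τ k ∧ p (j+1) ∈ τ k ∧
        insert (p j) (τ k) ∉ S ∧ p (j+1) ∈ circ S (τ k) (p j) := by
      intro k j hj
      obtain ⟨hjt, hjk⟩ := (hJLmem k j).mp hj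
      subst hjk
      obtain ⟨h1, h2, h3, h4⟩ := hp5 j hjt
      refine ⟨h1, ?_, h2, h3⟩
      obtain ⟨hcs, hcm⟩ := circ_spec hne hdown hexch (hτ (K j)) h2
      rcases Finset.mem_insert.mp (hcs h3) with h | h
      · exact absurd h h4
      · exact h
    have hJLnodup : ∀ k, (JL k).Nodup :=
      fun k => (List.nodup_range (n := t)).filter _
    have hJLlt : ∀ k, ∀ j ∈ JL k, j < t := fun k j hj => ((hJLmem k j).mp hj).1
    have hJLpw : ∀ k, (JL k).Pairwise (· < ·) :=
      fun k => (List.pairwise_lt_range (n := t)).filter _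
    have hfst : ∀ k, (LL k).map Prod.fst = (JL k).map (fun j => p j) := by
      intro k
      rw [hLL, List.map_map]
      rfl
    have hsnd : ∀ k, (LL k).map Prod.snd = (JL k).map (fun j => p (j+1)) := by
      intro k
      rw [hLL, List.map_map]
      rfl
    have hnd1 : ∀ k, ((LL k).map Prod.fst).Nodup := by
      intro k
      rw [hfst]
      refine List.Nodup.map_on ?_ (hJLnodup k)
      intro j hj j' hj' heq
      by_contra hne2
      rcases Nat.lt_or_ge j j' with h | h
      · exact hinj j j' h (le_of_lt (hJLlt k j' hj')) heq
      · exact hinj j' j (by omega) (le_of_lt (hJLlt k j hj)) heq.symm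
    have hnd2 : ∀ k, ((LL k).map Prod.snd).Nodup := by
      intro k
      rw [hsnd]
      refine List.Nodup.map_on ?_ (hJLnodup k)
      intro j hj j' hj' heq
      by_contra hne2
      rcases Nat.lt_or_ge j j' with h | h
      · exact hinj (j+1) (j'+1) (by omega) (hJLlt k j' hj') heq
      · exact hinj (j'+1) (j+1) (by omega) (hJLlt k j hj) heq.symm
    have hser : ∀ k, ((τ k ∪ ((LL k).map Prod.fst).toFinset) \
        ((LL k).map Prod.snd).toFinset) ∈ S := by
      intro k
      refine serial_exchange hne hdown hexch (hτ k) (LL k) ?_ (hnd1 k) (hnd2 k) ?_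
      · intro pr hpr
        obtain ⟨j, hj, rfl⟩ := List.mem_map.mp hpr
        obtain ⟨h1, h2, h3, h4⟩ := hpairk k j hj
        exact ⟨h1, h2, h3, h4⟩
      · rw [hLL]
        refine List.pairwise_map.mpr ?_
        refine List.Pairwise.imp_of_mem ?_ (hJLpw k)
        intro a b ha hb hab
        have hKa : K a = k := ((hJLmem k a).mp ha).2
        have := hnoshort a b hab (hJLlt k b hb)
        rwa [hKa] at this
    set Xf : Fin m → Finset (Fin n) := fun k => ((LL k).map Prod.fst).toFinset
      with hXf
    set Yf : Fin m → Finset (Fin n) := fun k => ((LL k).map Prod.snd).toFinset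
      with hYf
    have hXmem : ∀ k i', i' ∈ Xf k ↔ ∃ j, (j < t ∧ K j = k) ∧ p j = i' := by
      intro k i'
      rw [hXf]
      simp only [List.mem_toFinset, hfst k, List.mem_map]
      constructor
      · rintro ⟨j, hj, rfl⟩
        exact ⟨j, (hJLmem k j).mp hj, rfl⟩
      · rintro ⟨j, hj, rfl⟩
        exact ⟨j, (hJLmem k j).mpr hj, rfl⟩
    have hYmem : ∀ k i', i' ∈ Yf k ↔ ∃ j, (j < t ∧ K j = k) ∧ p (j+1) = i' := by
      intro k i'
      rw [hYf]
      simp only [List.mem_toFinset, hsnd k, List.mem_map]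
      constructor
      · rintro ⟨j, hj, rfl⟩
        exact ⟨j, (hJLmem k j).mp hj, rfl⟩
      · rintro ⟨j, hj, rfl⟩
        exact ⟨j, (hJLmem k j).mpr hj, rfl⟩
    set τ₁ : Fin m → Finset (Fin n) := fun k => (τ k ∪ Xf k) \ Yf k with hτ₁def
    have hτ₁ : ∀ k, τ₁ k ∈ S := fun k => hser k
    have hXτ : ∀ k, ∀ u ∈ Xf k, u ∉ τ k := by
      intro k u hu
      obtain ⟨j, hj, rfl⟩ := (hXmem k u).mp hu
      exact (hpairk k j ((hJLmem k j).mpr hj)).1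
    have hYτ : ∀ k, Yf k ⊆ τ k := by
      intro k u hu
      obtain ⟨j, hj, rfl⟩ := (hYmem k u).mp hu
      exact (hpairk k j ((hJLmem k j).mpr hj)).2.1
    have hXY : ∀ k, ∀ u ∈ Xf k, u ∉ Yf k :=
      fun k u hu hcon => hXτ k u hu (hYτ k hcon)
    have hcard1 : ∀ k, (τ₁ k).card = (τ k).card := by
      intro k
      have e1 : (Xf k).card = (JL k).length := by
        rw [hXf, List.card_toFinset, List.Nodup.dedup (hnd1 k), List.length_map,
          hLL, List.length_map]
      have e2 : (Yf k).card = (JL k).length := by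
        rw [hYf, List.card_toFinset, List.Nodup.dedup (hnd2 k), List.length_map,
          hLL, List.length_map]
      have e3 : (τ k ∪ Xf k).card = (τ k).card + (Xf k).card := by
        rw [Finset.card_union_of_disjoint]
        exact Finset.disjoint_right.mpr (fun u hu => hXτ k u hu)
      have e4 : Yf k ⊆ τ k ∪ Xf k :=
        (hYτ k).trans Finset.subset_union_left
      have e5 : (τ₁ k).card = (τ k ∪ Xf k).card - (Yf k).card := by
        rw [hτ₁def]
        exact Finset.card_sdiff_of_subset e4
      have e6 : (Yf k).card ≤ (τ k ∪ Xf k).card := Finset.card_le_card e4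
      omega
    -- the good part receives p t
    have hptz : p t = z := hp1
    have hwX : p t ∉ Xf kstar := by
      intro hcon
      obtain ⟨j, hj, heq⟩ := (hXmem kstar (p t)).mp hcon
      exact hinj j t hj.1 le_rfl heq
    have hwτ : p t ∉ τ kstar := hptz ▸ hzk1
    have hτ'star : insert (p t) (τ₁ kstar) ∈ S := by
      refine insert_into_exchanged hne hdown hexch (hτ kstar) (hτ₁ kstar)
        Finset.sdiff_subset (hcard1 kstar) ?_ ?_ (hptz ▸ hzk2)
      · intro u hu
        obtain ⟨j, hj, rfl⟩ := (hXmem kstar u).mp hu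
        have := (hpairk kstar j ((hJLmem kstar j).mpr hj)).2.2.1
        exact this
      · intro hcon
        rcases Finset.mem_union.mp hcon with h | h
        · exact hwτ h
        · exact hwX h
    set τ' : Fin m → Finset (Fin n) :=
      fun k => if k = kstar then insert (p t) (τ₁ kstar) else τ₁ k with hτ'def
    refine ⟨τ', ?_, ?_⟩
    · intro k
      rw [hτ'def]
      by_cases hk : k = kstar
      · simpa [hk] using hτ'star
      · simpa [hk] using hτ₁ k
    · -- coverage computation
      intro i
      have hptτ₁ : p t ∉ τ₁ kstar := by
        intro hcon
        rw [hτ₁def] at hcon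
        rcases Finset.mem_union.mp (Finset.mem_sdiff.mp hcon).1 with h | h
        · exact hwτ h
        · exact hwX h
      have step1 : ∀ k, (if i ∈ τ' k then (1:ℤ) else 0)
          = (if i ∈ τ₁ k then 1 else 0)
            + (if k = kstar then (if i = p t then (1:ℤ) else 0) else 0) := by
        intro k
        by_cases hk : k = kstar
        · subst hk
          rw [hτ'def]
          simp only [if_pos rfl]
          exact ind_insert (τ₁ k) (p t) i hptτ₁
        · rw [hτ'def]
          simp [hk]
      have step2 : ∀ k, (if i ∈ τ₁ k then (1:ℤ) else 0)
          = (if i ∈ τ k then 1 else 0) + (if i ∈ Xf k then 1 else 0)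
            - (if i ∈ Yf k then 1 else 0) := by
        intro k
        rw [hτ₁def]
        exact ind_sdiff (τ k) (Xf k) (Yf k) i (hXτ k) (hYτ k) (hXY k)
      have sumX : ∑ k, (if i ∈ Xf k then (1:ℤ) else 0)
          = ∑ j ∈ Finset.range t, (if p j = i then (1:ℤ) else 0) := by
        have perk : ∀ k, (if i ∈ Xf k then (1:ℤ) else 0)
            = ∑ j ∈ (Finset.range t).filter (fun j => K j = k),
                (if p j = i then (1:ℤ) else 0) := by
          intro k
          by_cases hi : i ∈ Xf k
          · obtain ⟨j0, hj0, hpj0⟩ := (hXmem k i).mp hi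
            rw [if_pos hi]
            rw [Finset.sum_eq_single_of_mem j0
              (Finset.mem_filter.mpr ⟨Finset.mem_range.mpr hj0.1, hj0.2⟩)]
            · rw [if_pos hpj0]
            · intro j hj hjne
              refine if_neg ?_
              intro hcon
              have hjt : j < t := Finset.mem_range.mp (Finset.mem_filter.mp hj).1
              rcases Nat.lt_or_ge j j0 with h | h
              · exact hinj j j0 h (by omega) (by rw [hcon, hpj0])
              · exact hinj j0 j (by omega) (by omega) (by rw [hcon, hpj0])
          · rw [if_neg hi]
            refine (Finset.sum_eq_zero ?_).symm
            intro j hj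
            refine if_neg ?_
            intro hcon
            exact hi ((hXmem k i).mpr ⟨j,
              ⟨Finset.mem_range.mp (Finset.mem_filter.mp hj).1,
                (Finset.mem_filter.mp hj).2⟩, hcon⟩)
        rw [Finset.sum_congr rfl (fun k _ => perk k)]
        exact Finset.sum_fiberwise (Finset.range t) K
          (fun j => if p j = i then (1:ℤ) else 0)
      have sumY : ∑ k, (if i ∈ Yf k then (1:ℤ) else 0)
          = ∑ j ∈ Finset.range t, (if p (j+1) = i then (1:ℤ) else 0) := by
        have perk : ∀ k, (if i ∈ Yf k then (1:ℤ) else 0)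
            = ∑ j ∈ (Finset.range t).filter (fun j => K j = k),
                (if p (j+1) = i then (1:ℤ) else 0) := by
          intro k
          by_cases hi : i ∈ Yf k
          · obtain ⟨j0, hj0, hpj0⟩ := (hYmem k i).mp hi
            rw [if_pos hi]
            rw [Finset.sum_eq_single_of_mem j0
              (Finset.mem_filter.mpr ⟨Finset.mem_range.mpr hj0.1, hj0.2⟩)]
            · rw [if_pos hpj0]
            · intro j hj hjne
              refine if_neg ?_
              intro hcon
              have hjt : j < t := Finset.mem_range.mp (Finset.mem_filter.mp hj).1
              rcases Nat.lt_or_ge j j0 with h | h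
              · exact hinj (j+1) (j0+1) (by omega) (by omega) (by rw [hcon, hpj0])
              · exact hinj (j0+1) (j+1) (by omega) (by omega) (by rw [hcon, hpj0])
          · rw [if_neg hi]
            refine (Finset.sum_eq_zero ?_).symm
            intro j hj
            refine if_neg ?_
            intro hcon
            exact hi ((hYmem k i).mpr ⟨j,
              ⟨Finset.mem_range.mp (Finset.mem_filter.mp hj).1,
                (Finset.mem_filter.mp hj).2⟩, hcon⟩)
        rw [Finset.sum_congr rfl (fun k _ => perk k)]
        exact Finset.sum_fiberwise (Finset.range t) K
          (fun j => if p (j+1) = i then (1:ℤ) else 0)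
      have sumIns : ∑ k : Fin m, (if k = kstar then (if i = p t then (1:ℤ) else 0) else 0)
          = (if i = p t then (1:ℤ) else 0) := by
        rw [Finset.sum_ite_eq' Finset.univ kstar
          (fun _ => (if i = p t then (1:ℤ) else 0))]
        simp
      have hflip1 : (if i = p t then (1:ℤ) else 0) = (if p t = i then 1 else 0) := by
        by_cases h : i = p t
        · rw [if_pos h, if_pos h.symm]
        · rw [if_neg h, if_neg (fun hc => h hc.symm)]
      have hflip2 : (if p 0 = i then (1:ℤ) else 0) = (if i = i0 then 1 else 0) := by
        rw [hp2]
        by_cases h : i = i0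
        · rw [if_pos h.symm, if_pos h]
        · rw [if_neg (fun hc => h hc.symm), if_neg h]
      have htele : ∑ j ∈ Finset.range t, (if p j = i then (1:ℤ) else 0)
            + (if p t = i then (1:ℤ) else 0)
          = (if p 0 = i then (1:ℤ) else 0)
            + ∑ j ∈ Finset.range t, (if p (j+1) = i then (1:ℤ) else 0) := by
        rw [← Finset.sum_range_succ (fun j => if p j = i then (1:ℤ) else 0) t,
          Finset.sum_range_succ' (fun j => if p j = i then (1:ℤ) else 0) t]
        exact add_comm _ _
      calc cov m τ' i = ∑ k, (if i ∈ τ' k then (1:ℤ) else 0) := rfl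
        _ = ∑ k, ((if i ∈ τ₁ k then (1:ℤ) else 0)
              + (if k = kstar then (if i = p t then (1:ℤ) else 0) else 0)) :=
            Finset.sum_congr rfl (fun k _ => step1 k)
        _ = ∑ k, (if i ∈ τ₁ k then (1:ℤ) else 0) + (if i = p t then (1:ℤ) else 0) := by
            rw [Finset.sum_add_distrib, sumIns]
        _ = cov m τ i + (if i = i0 then 1 else 0) := by
            have e := Finset.sum_congr rfl (fun k (_ : k ∈ Finset.univ) => step2 k)
            rw [e, Finset.sum_sub_distrib, Finset.sum_add_distrib, sumX, sumY, hflip1]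
            have : cov m τ i = ∑ k, (if i ∈ τ k then (1:ℤ) else 0) := rfl
            rw [this, ← hflip2]
            linarith [htele]
  · -- certificate case : contradiction with hx
    exfalso
    push_neg at hA
    obtain ⟨N, hN⟩ := lev_stab (S := S) τ i0
    set R := lev S τ i0 N with hR
    have hclosed : ∀ {z z' : Fin n} {k : Fin m}, z' ∈ R → z' ∉ τ k →
        insert z' (τ k) ∉ S → z ∈ circ S (τ k) z' → z ≠ z' → z ∈ R := by
      intro z z' k h1 h2 h3 h4 h5
      exact hN ▸ lev_closed (S := S) τ i0 h1 h2 h3 h4 h5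
    have hcard : ∀ k, (τ k ∩ R).card = rk S R := by
      intro k
      apply maximal_card hne hdown hexch (hdown _ (hτ k) _ Finset.inter_subset_left)
        Finset.inter_subset_right
      intro z hzR hznot hins
      have hzk : z ∉ τ k := by
        intro h
        exact hznot (Finset.mem_inter.mpr ⟨h, hzR⟩)
      have hdep : insert z (τ k) ∉ S := by
        have := hA N z (hR ▸ hzR) k
        tauto
      obtain ⟨hcs, hcm⟩ := circ_spec hne hdown hexch (hτ k) hdep
      have hcsub : circ S (τ k) z ⊆ insert z (τ k ∩ R) := by
        intro u hu
        rcases Finset.mem_insert.mp (hcs hu) with h | h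
        · exact Finset.mem_insert.mpr (Or.inl h)
        · by_cases huz : u = z
          · exact Finset.mem_insert.mpr (Or.inl huz)
          · exact Finset.mem_insert.mpr (Or.inr (Finset.mem_inter.mpr
              ⟨h, hclosed hzR hzk hdep hu huz⟩))
      exact hcm.1 (hdown _ hins _ hcsub)
    -- summing
    have hi0R : i0 ∈ R := by
      have : i0 ∈ lev S τ i0 0 := by simp [lev]
      exact lev_mono τ i0 (Nat.zero_le N) this
    have hsum1 : ∑ i ∈ R, cov m τ i = (m : ℤ) * rk S R := by
      unfold cov
      rw [Finset.sum_comm]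
      have hk : ∀ k : Fin m, ∑ i ∈ R, (if i ∈ τ k then (1:ℤ) else 0)
          = (rk S R : ℤ) := by
        intro k
        rw [Finset.sum_boole, Finset.filter_mem_eq_inter, Finset.inter_comm]
        exact_mod_cast hcard k
      rw [Finset.sum_congr rfl (fun k _ => hk k)]
      simp [Finset.sum_const, Finset.card_univ, mul_comm]
    have hsum2 : ∑ i ∈ R, x i ≥ ∑ i ∈ R, cov m τ i + 1 := by
      have h1 : ∑ i ∈ R, (cov m τ i + (if i = i0 then 1 else 0)) ≤ ∑ i ∈ R, x i :=
        Finset.sum_le_sum (fun i _ => hcov i)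
      rw [Finset.sum_add_distrib] at h1
      have h2 : ∑ i ∈ R, (if i = i0 then (1:ℤ) else 0) = 1 := by
        rw [Finset.sum_ite_eq' R i0 (fun _ => (1:ℤ))]
        simp [hi0R]
      omega
    have h3 := hx R
    rw [hsum1] at hsum2
    omega

include hne hdown hexch in
theorem key (m : ℕ) (x : Fin n → ℤ) (hx0 : ∀ i, 0 ≤ x i)
    (hx : ∀ A : Finset (Fin n), ∑ i ∈ A, x i ≤ m * rk S A) :
    ∃ τ : Fin m → Finset (Fin n), (∀ k, τ k ∈ S) ∧ ∀ i, cov m τ i = x i := by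
  by_cases hz : ∀ i, x i = 0
  · refine ⟨fun _ => ∅, fun k => empty_mem hne hdown, ?_⟩
    intro i
    simp [cov, hz i]
  · push_neg at hz
    obtain ⟨i0, hi0⟩ := hz
    have hi0pos : 1 ≤ x i0 := by
      have := hx0 i0
      omega
    set x' : Fin n → ℤ := Function.update x i0 (x i0 - 1) with hx'def
    have hx'i0 : x' i0 = x i0 - 1 := Function.update_self i0 _ x
    have hx'ne : ∀ i, i ≠ i0 → x' i = x i :=
      fun i h => Function.update_of_ne h _ x
    have hx'0 : ∀ i, 0 ≤ x' i := by
      intro i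
      by_cases h : i = i0
      · subst h
        omega
      · rw [hx'ne i h]
        exact hx0 i
    have hx'le : ∀ i, x' i ≤ x i := by
      intro i
      by_cases h : i = i0
      · subst h
        omega
      · rw [hx'ne i h]
    have hx'sum : ∀ A : Finset (Fin n), ∑ i ∈ A, x' i ≤ m * rk S A :=
      fun A => le_trans (Finset.sum_le_sum (fun i _ => hx'le i)) (hx A)
    have hdec : (∑ i, x' i).toNat < (∑ i, x i).toNat := by
      have h1 : ∑ i, x' i = ∑ i, x i - 1 := by
        rw [hx'def, Finset.sum_update_of_mem (Finset.mem_univ i0)]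
        rw [Finset.sum_eq_sum_sdiff_singleton_add (Finset.mem_univ i0) x]
        ring
      have h2 : 0 ≤ ∑ i, x' i := Finset.sum_nonneg (fun i _ => hx'0 i)
      omega
    obtain ⟨τ, hτ, hcovτ⟩ := key m x' hx'0 hx'sum
    have hcov : ∀ i, cov m τ i + (if i = i0 then 1 else 0) ≤ x i := by
      intro i
      rw [hcovτ i]
      by_cases h : i = i0
      · subst h
        rw [if_pos rfl, hx'i0]
        omega
      · rw [if_neg h, hx'ne i h]
        omega
    obtain ⟨τ', hτ', hcov'⟩ := aug hne hdown hexch τ hτ x hx i0 hcov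
    refine ⟨τ', hτ', ?_⟩
    intro i
    rw [hcov' i, hcovτ i]
    by_cases h : i = i0
    · subst h
      rw [if_pos rfl, hx'i0]
      ring
    · rw [if_neg h, hx'ne i h]
      ring
termination_by (∑ i, x i).toNat
decreasing_by exact hdec

omit hexch in
theorem sum_indicator (σ A : Finset (Fin n)) :
    ∑ i ∈ A, indVec σ i = ((σ ∩ A).card : ℤ) := by
  unfold indVec
  rw [Finset.sum_boole, Finset.filter_mem_eq_inter, Finset.inter_comm]

end Aug

end MN

/-- Let `S` be the collection of independent sets of a matroid on
`Fin n` (nonempty, closed under subsets, with the exchange property).  Then the affine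
monoid generated by `G = {(1, χ_σ) : σ ∈ S}` is normal: every element of the subgroup
generated by `G` that is a finite nonnegative rational linear combination of elements
of `G` already lies in the additive monoid generated by `G`. -/
theorem matroid_monoid_normal (n : ℕ) (S : Set (Finset (Fin n)))
    (hne : S.Nonempty)
    (hdown : ∀ I ∈ S, ∀ J ⊆ I, J ∈ S)
    (hexch : ∀ I ∈ S, ∀ J ∈ S, I.card < J.card → ∃ x ∈ J \ I, insert x I ∈ S) :
    ∀ z : ℤ × (Fin n → ℤ), z ∈ AddSubgroup.closure (genSet S) →
      (∃ (k : ℕ) (g : Fin k → ℤ × (Fin n → ℤ)) (c : Fin k → ℚ),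
        (∀ j, g j ∈ genSet S) ∧ (∀ j, 0 ≤ c j) ∧
        toRat z = ∑ j, c j • toRat (g j)) →
      z ∈ AddSubmonoid.closure (genSet S) := by
  intro z _ hcomb
  obtain ⟨kk, g, c, hg, hc, hsum⟩ := hcomb
  choose σ hσS hσeq using hg
  -- first coordinates
  have h1 : (z.1 : ℚ) = ∑ j, c j := by
    have := congrArg Prod.fst hsum
    simp only [toRat, Prod.fst_sum, Prod.smul_fst] at this
    rw [this]
    refine Finset.sum_congr rfl ?_
    intro j _
    rw [hσeq j]
    simp
  have hz1 : 0 ≤ z.1 := by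
    have : (0:ℚ) ≤ (z.1 : ℚ) := h1 ▸ Finset.sum_nonneg (fun j _ => hc j)
    exact_mod_cast this
  set m : ℕ := z.1.toNat with hm
  have hmz : (m : ℤ) = z.1 := Int.toNat_of_nonneg hz1
  -- second coordinates
  have h2 : ∀ i, (z.2 i : ℚ) = ∑ j, c j * ((indVec (σ j) i : ℤ) : ℚ) := by
    intro i
    have := congrFun (congrArg Prod.snd hsum) i
    simp only [toRat, Prod.snd_sum, Prod.smul_snd] at this
    rw [this, Finset.sum_apply]
    refine Finset.sum_congr rfl ?_
    intro j _
    rw [hσeq j]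
    simp [toRat]
  have hx0 : ∀ i, 0 ≤ z.2 i := by
    intro i
    have : (0:ℚ) ≤ (z.2 i : ℚ) := by
      rw [h2 i]
      refine Finset.sum_nonneg ?_
      intro j _
      have h3 : (0:ℤ) ≤ indVec (σ j) i := by
        unfold indVec
        split <;> norm_num
      have h4 : (0:ℚ) ≤ ((indVec (σ j) i : ℤ) : ℚ) := by exact_mod_cast h3
      exact mul_nonneg (hc j) h4
    exact_mod_cast this
  have hx : ∀ A : Finset (Fin n), ∑ i ∈ A, z.2 i ≤ (m : ℤ) * MN.rk S A := by
    intro A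
    have hq : (∑ i ∈ A, (z.2 i : ℚ)) ≤ (z.1 : ℚ) * (MN.rk S A : ℚ) := by
      have e1 : ∑ i ∈ A, (z.2 i : ℚ)
          = ∑ j, c j * (((σ j ∩ A).card : ℤ) : ℚ) := by
        rw [Finset.sum_congr rfl (fun i (_ : i ∈ A) => h2 i), Finset.sum_comm]
        refine Finset.sum_congr rfl ?_
        intro j _
        rw [← Finset.mul_sum]
        congr 1
        have hsi := MN.sum_indicator (n := n) (σ j) A
        exact_mod_cast congrArg (fun t : ℤ => (t : ℚ)) hsi
      rw [e1, h1, Finset.sum_mul]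
      refine Finset.sum_le_sum ?_
      intro j _
      have hcard : ((σ j ∩ A).card : ℚ) ≤ (MN.rk S A : ℚ) := by
        have := MN.card_le_rk hne hdown
          (hdown (σ j) (hσS j) (σ j ∩ A) Finset.inter_subset_left)
          Finset.inter_subset_right
        exact_mod_cast this
      have : c j * (((σ j ∩ A).card : ℤ) : ℚ) ≤ c j * (MN.rk S A : ℚ) := by
        refine mul_le_mul_of_nonneg_left ?_ (hc j)
        push_cast
        exact hcard
      exact this
    rw [← hmz] at hq
    exact_mod_cast hq
  obtain ⟨τ, hτ, hcov⟩ := MN.key hne hdown hexch m z.2 hx0 hx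
  have hzeq : z = ∑ k : Fin m, ((1 : ℤ), indVec (τ k)) := by
    refine Prod.ext ?_ ?_
    · rw [Prod.fst_sum]
      simp only [Finset.sum_const, Finset.card_univ, Fintype.card_fin,
        nsmul_eq_mul, mul_one]
      exact hmz.symm
    · funext i
      rw [Prod.snd_sum]
      rw [Finset.sum_apply]
      have : ∑ k : Fin m, indVec (τ k) i = MN.cov m τ i := by
        unfold MN.cov indVec
        rfl
      rw [this, hcov i]
  rw [hzeq]
  refine AddSubmonoid.sum_mem _ ?_
  intro k _
  exact AddSubmonoid.subset_closure ⟨τ k, hτ k, rfl⟩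
end

section
/- Let u be a tensor of format d with strictly positive entries summing to 1. Define P* by P*(x) = ∏ i, u_{{i}}(x i), the outer product of the one-dimensional marginalizations of u. Then P* has rank at most one, strictly positive entries summing to 1, and for every tensor P of rank at most one with strictly positive entries summing to 1, ∑_x u(x) · log P(x) ≤ ∑_x u(x) · log P*(x), with equality if and only if P = P*. -/
/-- A tensor of format `m : ι → ℕ` has rank at most one if its entries factor as a
product of vectors. -/
def RankOneOn {ι : Type} [Fintype ι] {m : ι → ℕ} (T : (∀ i, Fin (m i)) → ℝ) : Prop :=
  ∃ v : ∀ i, Fin (m i) → ℝ, ∀ y, T y = ∏ i, v i (y i)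

/-- The one-dimensional marginalization of a tensor `P` to the singleton `{i}`:
the value at `a : Fin (d i)` is the sum of `P x` over all `x` with `x i = a`. -/
def marg1 {n : ℕ} {d : Fin n → ℕ} (P : (∀ i, Fin (d i)) → ℝ) (i : Fin n) :
    Fin (d i) → ℝ :=
  fun a => ∑ x : ∀ j, Fin (d j), if x i = a then P x else 0

/-- The outer product of the one-dimensional marginalizations of a tensor `u`. -/
def outerMarg {n : ℕ} {d : Fin n → ℕ} (u : (∀ i, Fin (d i)) → ℝ) :
    (∀ i, Fin (d i)) → ℝ :=
  fun x => ∏ i, marg1 u i (x i)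

section Aux

variable {n : ℕ} {d : Fin n → ℕ}

lemma marg1_pos (hd : ∀ i, 1 ≤ d i) (u : (∀ i, Fin (d i)) → ℝ) (hu : ∀ x, 0 < u x)
    (i : Fin n) (a : Fin (d i)) : 0 < marg1 u i a := by
  classical
  unfold marg1
  refine Finset.sum_pos' (fun x _ => by split_ifs with h; exacts [(hu x).le, le_refl 0]) ?_
  refine ⟨Function.update (fun j => (⟨0, Nat.lt_of_lt_of_le Nat.zero_lt_one (hd j)⟩ : Fin (d j))) i a,
    Finset.mem_univ _, ?_⟩
  split_ifs with h
  · exact hu _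
  · simp at h

lemma marg1_sum (u : (∀ i, Fin (d i)) → ℝ) (i : Fin n) :
    ∑ a, marg1 u i a = ∑ x, u x := by
  unfold marg1
  rw [Finset.sum_comm]
  exact Finset.sum_congr rfl fun x _ => by simp

lemma marg1_expand (u : (∀ i, Fin (d i)) → ℝ) (i : Fin n) (f : Fin (d i) → ℝ) :
    ∑ a, marg1 u i a * f a = ∑ x, u x * f (x i) := by
  unfold marg1
  simp only [Finset.sum_mul]
  rw [Finset.sum_comm]
  refine Finset.sum_congr rfl fun x _ => ?_
  simp only [ite_mul, zero_mul, Finset.sum_ite_eq, Finset.mem_univ, if_true]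

lemma prod_sum_eq (v : ∀ i, Fin (d i) → ℝ) :
    ∏ i, ∑ a, v i a = ∑ x : ∀ i, Fin (d i), ∏ i, v i (x i) := by
  rw [Finset.prod_univ_sum, Fintype.piFinset_univ]

end Aux

lemma gibbs {α : Type*} [Fintype α] (q p : α → ℝ) (hq : ∀ a, 0 < q a) (hp : ∀ a, 0 < p a)
    (hqs : ∑ a, q a = 1) (hps : ∑ a, p a = 1) :
    (∑ a, q a * Real.log (p a) ≤ ∑ a, q a * Real.log (q a)) ∧
    ((∑ a, q a * Real.log (p a) = ∑ a, q a * Real.log (q a)) ↔ p = q) := by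
  have hpt : ∀ a : α, q a * Real.log (p a) - q a * Real.log (q a) ≤ p a - q a := by
    intro a
    have h1 : q a * Real.log (p a) - q a * Real.log (q a) = q a * Real.log (p a / q a) := by
      rw [Real.log_div (ne_of_gt (hp a)) (ne_of_gt (hq a))]; ring
    have h2 : Real.log (p a / q a) ≤ p a / q a - 1 :=
      Real.log_le_sub_one_of_pos (div_pos (hp a) (hq a))
    have h0 : q a ≠ 0 := ne_of_gt (hq a)
    have h3 : q a * (p a / q a - 1) = p a - q a := by
      field_simp
    rw [h1, ← h3]
    exact mul_le_mul_of_nonneg_left h2 (hq a).le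
  have hsum0 : ∑ a : α, (p a - q a) = 0 := by
    rw [Finset.sum_sub_distrib, hps, hqs, sub_self]
  have hle : ∑ a, q a * Real.log (p a) ≤ ∑ a, q a * Real.log (q a) := by
    have h := Finset.sum_le_sum (fun a (_ : a ∈ Finset.univ) => hpt a)
    rw [Finset.sum_sub_distrib, hsum0] at h
    linarith
  refine ⟨hle, ⟨?_, fun h => by rw [h]⟩⟩
  intro heq
  by_contra hne
  obtain ⟨a0, ha0⟩ := Function.ne_iff.mp hne
  have hst : ∑ a, (q a * Real.log (p a) - q a * Real.log (q a)) < ∑ a : α, (p a - q a) := by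
    refine Finset.sum_lt_sum (fun a _ => hpt a) ⟨a0, Finset.mem_univ _, ?_⟩
    have h1 : q a0 * Real.log (p a0) - q a0 * Real.log (q a0) = q a0 * Real.log (p a0 / q a0) := by
      rw [Real.log_div (ne_of_gt (hp a0)) (ne_of_gt (hq a0))]; ring
    have h2 : Real.log (p a0 / q a0) < p a0 / q a0 - 1 :=
      Real.log_lt_sub_one_of_pos (div_pos (hp a0) (hq a0))
        (fun h => ha0 ((div_eq_one_iff_eq (ne_of_gt (hq a0))).mp h))
    have h0 : q a0 ≠ 0 := ne_of_gt (hq a0)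
    have h3 : q a0 * (p a0 / q a0 - 1) = p a0 - q a0 := by field_simp
    rw [h1, ← h3]
    exact (mul_lt_mul_iff_right₀ (hq a0)).mpr h2
  rw [hsum0, Finset.sum_sub_distrib, heq, sub_self] at hst
  exact lt_irrefl (0:ℝ) hst

lemma rankone_normalize {n : ℕ} (hn : 1 ≤ n) {d : Fin n → ℕ} (hd : ∀ i, 1 ≤ d i)
    (P : (∀ i, Fin (d i)) → ℝ) (hP : RankOneOn P) (hpos : ∀ x, 0 < P x)
    (hsum : ∑ x, P x = 1) :
    ∃ p : ∀ i, Fin (d i) → ℝ, (∀ i a, 0 < p i a) ∧ (∀ i, ∑ a, p i a = 1) ∧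
      ∀ x, P x = ∏ i, p i (x i) := by
  classical
  obtain ⟨v, hv⟩ := hP
  set x₀ : ∀ i, Fin (d i) := fun j => ⟨0, Nat.lt_of_lt_of_le Nat.zero_lt_one (hd j)⟩ with hx₀
  have hPx₀ : 0 < ∏ i, v i (x₀ i) := hv x₀ ▸ hpos x₀
  have hvne : ∀ i, v i (x₀ i) ≠ 0 := by
    intro i
    intro h
    rw [Finset.prod_eq_zero (Finset.mem_univ i) h] at hPx₀
    exact lt_irrefl 0 hPx₀
  have hratio : ∀ i (a : Fin (d i)), 0 < v i a / v i (x₀ i) := by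
    intro i a
    have hx : P (Function.update x₀ i a) / P x₀ = v i a / v i (x₀ i) := by
      rw [hv, hv, ← Finset.prod_div_distrib]
      rw [Finset.prod_eq_single i]
      · rw [Function.update_self]
      · intro j _ hj
        rw [Function.update_of_ne hj, div_self (hvne j)]
      · intro h
        exact (h (Finset.mem_univ i)).elim
    rw [← hx]
    exact div_pos (hpos _) (hpos _)
  -- scale by t = (P x₀)^(1/n)
  set t : ℝ := (P x₀) ^ ((n : ℝ)⁻¹) with ht
  have htpos : 0 < t := Real.rpow_pos_of_pos (hpos x₀) _
  have htn : t ^ n = P x₀ := by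
    rw [ht, ← Real.rpow_natCast ((P x₀) ^ ((n : ℝ)⁻¹)) n, ← Real.rpow_mul (hpos x₀).le,
      inv_mul_cancel₀ (show (n:ℝ) ≠ 0 from Nat.cast_ne_zero.mpr (by omega)), Real.rpow_one]
  set w : ∀ i, Fin (d i) → ℝ := fun i a => (v i a / v i (x₀ i)) * t with hw
  have hwpos : ∀ i a, 0 < w i a := fun i a => mul_pos (hratio i a) htpos
  have hwP : ∀ x, P x = ∏ i, w i (x i) := by
    intro x
    rw [hw]
    simp only
    rw [Finset.prod_mul_distrib, Finset.prod_const, Finset.card_univ, Fintype.card_fin, htn,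
      Finset.prod_div_distrib, ← hv x, ← hv x₀, div_mul_cancel₀ _ (ne_of_gt (hpos x₀))]
  -- normalize
  set s : ∀ i, ℝ := fun i => ∑ a, w i a with hs
  have hspos : ∀ i, 0 < s i := by
    intro i
    have : Nonempty (Fin (d i)) := ⟨⟨0, Nat.lt_of_lt_of_le Nat.zero_lt_one (hd i)⟩⟩
    exact Finset.sum_pos (fun a _ => hwpos i a) Finset.univ_nonempty
  have hsprod : ∏ i, s i = 1 := by
    rw [hs]
    simp only
    rw [prod_sum_eq, ← hsum]
    exact Finset.sum_congr rfl fun x _ => (hwP x).symm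
  refine ⟨fun i a => w i a / s i, fun i a => div_pos (hwpos i a) (hspos i),
    fun i => by rw [← Finset.sum_div, div_self (ne_of_gt (hspos i))], fun x => ?_⟩
  show P x = ∏ i, w i (x i) / s i
  rw [Finset.prod_div_distrib, hsprod, div_one]
  exact hwP x

lemma loglik_expand {n : ℕ} {d : Fin n → ℕ} (u : (∀ i, Fin (d i)) → ℝ)
    (p : ∀ i, Fin (d i) → ℝ) (hp : ∀ i a, 0 < p i a) :
    ∑ x : ∀ i, Fin (d i), u x * Real.log (∏ i, p i (x i)) =
      ∑ i, ∑ a, marg1 u i a * Real.log (p i a) := by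
  calc ∑ x : ∀ i, Fin (d i), u x * Real.log (∏ i, p i (x i))
      = ∑ x : ∀ i, Fin (d i), ∑ i, u x * Real.log (p i (x i)) := by
        refine Finset.sum_congr rfl fun x _ => ?_
        rw [Real.log_prod (fun i _ => ne_of_gt (hp i (x i))), Finset.mul_sum]
    _ = ∑ i, ∑ x : ∀ i, Fin (d i), u x * Real.log (p i (x i)) := Finset.sum_comm
    _ = ∑ i, ∑ a, marg1 u i a * Real.log (p i a) :=
        Finset.sum_congr rfl fun i _ => (marg1_expand u i (fun a => Real.log (p i a))).symm

/-- For a data tensor `u` with strictly positive entries summing to `1`,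
the outer product `P* = outerMarg u` of its one-dimensional marginalizations has rank
at most one, strictly positive entries summing to `1`, and maximizes the log-likelihood
`∑ u(x) log P(x)` uniquely among all rank-at-most-one tensors `P` with strictly
positive entries summing to `1`. -/
theorem mle_segre (n : ℕ) (hn : 1 ≤ n) (d : Fin n → ℕ) (hd : ∀ i, 1 ≤ d i)
    (u : (∀ i, Fin (d i)) → ℝ) (hu : ∀ x, 0 < u x) (husum : ∑ x, u x = 1) :
    RankOneOn (outerMarg u) ∧ (∀ x, 0 < outerMarg u x) ∧
      (∑ x, outerMarg u x = 1) ∧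
      ∀ P : (∀ i, Fin (d i)) → ℝ, RankOneOn P → (∀ x, 0 < P x) → (∑ x, P x = 1) →
        (∑ x, u x * Real.log (P x) ≤ ∑ x, u x * Real.log (outerMarg u x)) ∧
        ((∑ x, u x * Real.log (P x) = ∑ x, u x * Real.log (outerMarg u x)) ↔
          P = outerMarg u) := by
  classical
  have hqpos : ∀ (i : Fin n) (a : Fin (d i)), 0 < marg1 u i a := marg1_pos hd u hu
  have hqsum : ∀ i, ∑ a, marg1 u i a = 1 := fun i => by rw [marg1_sum, husum]
  have hpos : ∀ x, 0 < outerMarg u x :=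
    fun x => Finset.prod_pos fun i _ => hqpos i (x i)
  have hsum1 : ∑ x, outerMarg u x = 1 := by
    unfold outerMarg
    rw [← prod_sum_eq]
    exact Finset.prod_eq_one fun i _ => hqsum i
  refine ⟨⟨fun i => marg1 u i, fun y => rfl⟩, hpos, hsum1, ?_⟩
  intro P hPr hPpos hPsum
  obtain ⟨p, hppos, hpsum, hprep⟩ := rankone_normalize hn hd P hPr hPpos hPsum
  have hG := fun i => gibbs (marg1 u i) (p i) (hqpos i) (hppos i) (hqsum i) (hpsum i)
  have hLP : ∑ x, u x * Real.log (P x) = ∑ i, ∑ a, marg1 u i a * Real.log (p i a) := by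
    rw [show (∑ x, u x * Real.log (P x)) = ∑ x, u x * Real.log (∏ i, p i (x i)) from
      Finset.sum_congr rfl fun x _ => by rw [hprep x]]
    exact loglik_expand u p hppos
  have hLQ : ∑ x, u x * Real.log (outerMarg u x)
      = ∑ i, ∑ a, marg1 u i a * Real.log (marg1 u i a) :=
    loglik_expand u (fun i => marg1 u i) hqpos
  constructor
  · rw [hLP, hLQ]
    exact Finset.sum_le_sum fun i _ => (hG i).1
  constructor
  · intro heq
    rw [hLP, hLQ] at heq
    have hterm := (Finset.sum_eq_sum_iff_of_le (fun i _ => (hG i).1)).mp heq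
    funext x
    rw [hprep x]
    exact Finset.prod_congr rfl fun i _ =>
      congrFun (((hG i).2).mp (hterm i (Finset.mem_univ i))) (x i)
  · intro h
    rw [h]
end
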